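/- Refutational completeness of CP resolution (Corollary 1): for any finite set Π of constraints over variables x_1,…,x_D, if Π is unsatisfiable, then the variable-free set Π_0 obtained by successively eliminating x_D, x_{D-1}, …, x_1 via the disjunctive elimination procedure contains a false constraint, i.e., a disjunction of constant inequalities b_1 ≥ 0, …, b_s ≥ 0 with all b_t < 0. -/
import Mathlib


open scoped Classical

namespace DisjElim

/-- A linear inequality `∑ k, w k * x k + b ≥ 0` over the variables `x_1, …, x_D`. -/
structure Ineq (D : ℕ) where
  w : Fin D → ℝ
  b : ℝ

/-- The value of the linear expression of an inequality at a point. -/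
def Ineq.eval {D : ℕ} (ι : Ineq D) (x : Fin D → ℝ) : ℝ := ∑ k, ι.w k * x k + ι.b

/-- A constraint: a finite disjunction of linear inequalities. -/
abbrev Constraint (D : ℕ) := Finset (Ineq D)

/-- `x` satisfies a constraint iff it satisfies some disjunct. -/
def Constraint.Sat {D : ℕ} (C : Constraint D) (x : Fin D → ℝ) : Prop :=
  ∃ ι ∈ C, ι.eval x ≥ 0

/-- `x` satisfies a set of constraints iff it satisfies every constraint in the set. -/
def SatAll {D : ℕ} (Pi : Finset (Constraint D)) (x : Fin D → ℝ) : Prop :=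
  ∀ C ∈ Pi, C.Sat x

/-- The variable `x_i` occurs positively in the constraint. -/
def hasPos {D : ℕ} (i : Fin D) (C : Constraint D) : Prop := ∃ ι ∈ C, 0 < ι.w i

/-- The variable `x_i` occurs negatively in the constraint. -/
def hasNeg {D : ℕ} (i : Fin D) (C : Constraint D) : Prop := ∃ ι ∈ C, ι.w i < 0

/-- The CP resolution rule on `x_i` between `Ψ` (whose positive-occurrence disjuncts are
resolved) and `Ψ'` (whose negative-occurrence disjuncts are resolved): the disjunction of
all resolvents `φ/w_i(Ψ-part) - φ'/w'_i(Ψ'-part) ≥ 0` together with the remaining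
disjuncts `Φ` of `Ψ` and `Φ'` of `Ψ'`. -/
noncomputable def CPres {D : ℕ} (i : Fin D) (Ψ Ψ' : Constraint D) : Constraint D :=
  ((Ψ.filter (fun ι => 0 < ι.w i)) ×ˢ (Ψ'.filter (fun ι => ι.w i < 0))).image
    (fun p => (⟨fun k => p.1.w k / p.1.w i - p.2.w k / p.2.w i,
                p.1.b / p.1.w i - p.2.b / p.2.w i⟩ : Ineq D))
    ∪ Ψ.filter (fun ι => ¬ 0 < ι.w i) ∪ Ψ'.filter (fun ι => ¬ ι.w i < 0)

/-- `Π_i^+`: constraints with positive and without negative occurrences of `x_i`. -/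
noncomputable def posPart {D : ℕ} (i : Fin D) (Pi : Finset (Constraint D)) :
    Finset (Constraint D) :=
  Pi.filter (fun C => hasPos i C ∧ ¬ hasNeg i C)

/-- `Π_i^-`: constraints with negative and without positive occurrences of `x_i`. -/
noncomputable def negPart {D : ℕ} (i : Fin D) (Pi : Finset (Constraint D)) :
    Finset (Constraint D) :=
  Pi.filter (fun C => ¬ hasPos i C ∧ hasNeg i C)

/-- `Π_i^±`: constraints with both positive and negative occurrences of `x_i`. -/
noncomputable def mixPart {D : ℕ} (i : Fin D) (Pi : Finset (Constraint D)) :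
    Finset (Constraint D) :=
  Pi.filter (fun C => hasPos i C ∧ hasNeg i C)

/-- Constraints in which `x_i` does not occur. -/
noncomputable def freePart {D : ℕ} (i : Fin D) (Pi : Finset (Constraint D)) :
    Finset (Constraint D) :=
  Pi.filter (fun C => ¬ hasPos i C ∧ ¬ hasNeg i C)

/-- `Π_i^k`: the `k`-fold CP resolution of `Π_i^+` against the mixed part `Π_i^±`. -/
noncomputable def iterRes {D : ℕ} (i : Fin D) (pm : Finset (Constraint D))
    (p0 : Finset (Constraint D)) : ℕ → Finset (Constraint D)
  | 0 => p0
  | k + 1 => ((iterRes i pm p0 k) ×ˢ pm).image (fun p => CPres i p.1 p.2)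

/-- `Π_i^{++} = ⋃_{k=0}^{|Π_i^±|} Π_i^k`. -/
noncomputable def closurePlus {D : ℕ} (i : Fin D) (Pi : Finset (Constraint D)) :
    Finset (Constraint D) :=
  (Finset.range ((mixPart i Pi).card + 1)).biUnion
    (fun k => iterRes i (mixPart i Pi) (posPart i Pi) k)

/-- One step of disjunctive variable elimination:
`Π_{i-1} = (Π_i` minus all constraints containing `x_i) ∪
{CPres_i(Ψ, Ψ') : Ψ ∈ Π_i^{++}, Ψ' ∈ Π_i^-}`. -/
noncomputable def elimVar {D : ℕ} (i : Fin D) (Pi : Finset (Constraint D)) :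
    Finset (Constraint D) :=
  freePart i Pi ∪ ((closurePlus i Pi) ×ˢ (negPart i Pi)).image (fun p => CPres i p.1 p.2)

end DisjElim

namespace DisjElim

/-- The elimination sequence: `piSeq Π k` is the paper's `Π_{D-k}`; i.e. `piSeq Π 0 = Π_D = Π`
and `piSeq Π (k+1)` eliminates the variable `x_{D-k}` (0-based index `D-1-k`) from
`piSeq Π k`. In particular `Π_i = piSeq Π (D - i)` and `Π_0 = piSeq Π D`. -/
noncomputable def piSeq {D : ℕ} (Pi : Finset (Constraint D)) : ℕ → Finset (Constraint D)
  | 0 => Pi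
  | k + 1 =>
      if h : D - 1 - k < D then elimVar ⟨D - 1 - k, h⟩ (piSeq Pi k) else piSeq Pi k

/-- The feasible set for the single variable `x_i` obtained by substituting the values `v`
for the other variables into the constraint set. -/
def Feas {D : ℕ} (Pi : Finset (Constraint D)) (i : Fin D) (v : Fin D → ℝ) : Set ℝ :=
  {t : ℝ | SatAll Pi (Function.update v i t)}

/-- Single-variable refinement: return `t` if it is feasible, otherwise the feasible value
nearest to `t` (choosing the closest satisfying left/right boundary, the right one on
ties), expressed via suprema/infima in the extended reals. -/
noncomputable def refine (S : Set ℝ) (t : ℝ) : ℝ :=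
  if t ∈ S then t
  else if (t : EReal) - sSup ((fun s : ℝ => (s : EReal)) '' (S ∩ Set.Iio t)) <
      sInf ((fun s : ℝ => (s : EReal)) '' (S ∩ Set.Ioi t)) - (t : EReal) then
    (sSup ((fun s : ℝ => (s : EReal)) '' (S ∩ Set.Iio t))).toReal
  else
    (sInf ((fun s : ℝ => (s : EReal)) '' (S ∩ Set.Ioi t))).toReal

/-- The forward pass of DRL: `drlAux Π x̃ k` has the first `k` coordinates refined.
At step `k` the coordinate `x_{k+1}` (0-based index `k`) is set to the value of
`Π̃_{k+1}` (the substituted single-variable version of `Π_{k+1} = piSeq Π (D-1-k)`)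
nearest to `x̃_{k+1}`. -/
noncomputable def drlAux {D : ℕ} (Pi : Finset (Constraint D)) (x : Fin D → ℝ) :
    ℕ → (Fin D → ℝ)
  | 0 => x
  | k + 1 =>
      if h : k < D then
        Function.update (drlAux Pi x k) ⟨k, h⟩
          (refine (Feas (piSeq Pi (D - 1 - k)) ⟨k, h⟩ (drlAux Pi x k)) (x ⟨k, h⟩))
      else drlAux Pi x k

/-- The Disjunctive Refinement Layer on `ℝ^D`. -/
noncomputable def DRL {D : ℕ} (Pi : Finset (Constraint D)) (x : Fin D → ℝ) : Fin D → ℝ :=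
  drlAux Pi x D

end DisjElim

namespace DisjElim

variable {D : ℕ}

lemma eval_update (ι : Ineq D) (x : Fin D → ℝ) (i : Fin D) (t : ℝ) :
    ι.eval (Function.update x i t) = ι.w i * t + ι.eval (Function.update x i 0) := by
  have h : ∀ s : ℝ, ∑ k, ι.w k * Function.update x i s k
      = ι.w i * s + ∑ k ∈ Finset.univ \ {i}, ι.w k * x k := by
    intro s
    have hfun : (fun k => ι.w k * Function.update x i s k)
        = Function.update (fun k => ι.w k * x k) i (ι.w i * s) := by
      funext k
      by_cases hk : k = i
      · subst hk; simp
      · simp [Function.update_of_ne hk]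
    rw [show ∑ k, ι.w k * Function.update x i s k
        = ∑ k, Function.update (fun k => ι.w k * x k) i (ι.w i * s) k from by rw [hfun],
      Finset.sum_update_of_mem (Finset.mem_univ i)]
  unfold Ineq.eval
  rw [h t, h 0]
  ring

/-- the threshold value of an inequality -/
noncomputable def rv (i : Fin D) (x : Fin D → ℝ) (ι : Ineq D) : ℝ :=
  -(ι.eval (Function.update x i 0)) / ι.w i

lemma eval_update_zero_w {ι : Ineq D} {i : Fin D} (x : Fin D → ℝ) (h : ι.w i = 0) (t : ℝ) :
    ι.eval (Function.update x i t) = ι.eval x := by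
  conv_rhs => rw [← Function.update_eq_self i x]
  rw [eval_update, eval_update ι x i (x i), h] ; ring

lemma sat_pos {ι : Ineq D} {i : Fin D} (x : Fin D → ℝ) (h : 0 < ι.w i) (t : ℝ) :
    0 ≤ ι.eval (Function.update x i t) ↔ rv i x ι ≤ t := by
  rw [eval_update, rv, div_le_iff₀ h]
  constructor <;> intro h1 <;> nlinarith

lemma sat_neg {ι : Ineq D} {i : Fin D} (x : Fin D → ℝ) (h : ι.w i < 0) (t : ℝ) :
    0 ≤ ι.eval (Function.update x i t) ↔ t ≤ rv i x ι := by
  rw [eval_update, rv, le_div_iff_of_neg h]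
  constructor <;> intro h1 <;> nlinarith

/-- the resolvent inequality -/
noncomputable def resolvent (i : Fin D) (ι ι' : Ineq D) : Ineq D :=
  ⟨fun k => ι.w k / ι.w i - ι'.w k / ι'.w i, ι.b / ι.w i - ι'.b / ι'.w i⟩

lemma resolvent_eval (i : Fin D) (ι ι' : Ineq D) (y : Fin D → ℝ) :
    (resolvent i ι ι').eval y = ι.eval y / ι.w i - ι'.eval y / ι'.w i := by
  simp only [resolvent, Ineq.eval, add_div, Finset.sum_div, sub_mul,
    Finset.sum_sub_distrib, div_mul_eq_mul_div]
  ring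

lemma resolvent_w_self {i : Fin D} {ι ι' : Ineq D} (h : ι.w i ≠ 0) (h' : ι'.w i ≠ 0) :
    (resolvent i ι ι').w i = 0 := by
  simp [resolvent, div_self h, div_self h']

lemma resolvent_sat {i : Fin D} {ι ι' : Ineq D} (x : Fin D → ℝ)
    (hp : 0 < ι.w i) (hn : ι'.w i < 0) :
    0 ≤ (resolvent i ι ι').eval x ↔ rv i x ι ≤ rv i x ι' := by
  have h0 : (resolvent i ι ι').eval x = (resolvent i ι ι').eval (Function.update x i 0) := by
    rw [eval_update_zero_w x (resolvent_w_self hp.ne' hn.ne) 0]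
  rw [h0, resolvent_eval, rv, rv, neg_div, neg_div]
  constructor <;> intro h1 <;> linarith

end DisjElim

namespace DisjElim

variable {D : ℕ}

/-- predicate: inequality satisfied at `x` with zero coefficient on `i` -/
def zsat (i : Fin D) (x : Fin D → ℝ) (C : Constraint D) : Prop :=
  ∃ ι ∈ C, ι.w i = 0 ∧ 0 ≤ ι.eval x

lemma sat_of_zsat {i : Fin D} {x : Fin D → ℝ} {C : Constraint D}
    (h : zsat i x C) (t : ℝ) : C.Sat (Function.update x i t) := by
  obtain ⟨ι, hι, hw, hs⟩ := h
  exact ⟨ι, hι, by rw [ge_iff_le, eval_update_zero_w x hw t]; exact hs⟩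

lemma mem_CPres {i : Fin D} {Ψ Ψ' : Constraint D} {ι₀ : Ineq D} (h : ι₀ ∈ CPres i Ψ Ψ') :
    (∃ ι ∈ Ψ, ∃ ι' ∈ Ψ', 0 < ι.w i ∧ ι'.w i < 0 ∧ ι₀ = resolvent i ι ι') ∨
    (ι₀ ∈ Ψ ∧ ¬ 0 < ι₀.w i) ∨ (ι₀ ∈ Ψ' ∧ ¬ ι₀.w i < 0) := by
  unfold CPres at h
  rcases Finset.mem_union.1 h with h | h
  · rcases Finset.mem_union.1 h with h | h
    · obtain ⟨p, hp, rfl⟩ := Finset.mem_image.1 h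
      obtain ⟨h1, h2⟩ := Finset.mem_product.1 hp
      obtain ⟨h1a, h1b⟩ := Finset.mem_filter.1 h1
      obtain ⟨h2a, h2b⟩ := Finset.mem_filter.1 h2
      exact Or.inl ⟨p.1, h1a, p.2, h2a, h1b, h2b, rfl⟩
    · obtain ⟨ha, hb⟩ := Finset.mem_filter.1 h
      exact Or.inr (Or.inl ⟨ha, hb⟩)
  · obtain ⟨ha, hb⟩ := Finset.mem_filter.1 h
    exact Or.inr (Or.inr ⟨ha, hb⟩)

lemma resolvent_mem_CPres {i : Fin D} {Ψ Ψ' : Constraint D} {ι ι' : Ineq D}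
    (hι : ι ∈ Ψ) (hp : 0 < ι.w i) (hι' : ι' ∈ Ψ') (hn : ι'.w i < 0) :
    resolvent i ι ι' ∈ CPres i Ψ Ψ' := by
  unfold CPres
  exact Finset.mem_union_left _ (Finset.mem_union_left _ (Finset.mem_image.2
    ⟨(ι, ι'), Finset.mem_product.2 ⟨Finset.mem_filter.2 ⟨hι, hp⟩,
      Finset.mem_filter.2 ⟨hι', hn⟩⟩, rfl⟩))

lemma iterRes_inv (i : Fin D) (pm p0 : Finset (Constraint D)) (q : Fin D → Prop)
    (hpm : ∀ C ∈ pm, ∀ ι ∈ C, ∀ k, q k → ι.w k = 0)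
    (hp0 : ∀ C ∈ p0, ∀ ι ∈ C, (∀ k, q k → ι.w k = 0) ∧ 0 ≤ ι.w i) :
    ∀ n, ∀ C ∈ iterRes i pm p0 n, ∀ ι ∈ C, (∀ k, q k → ι.w k = 0) ∧ 0 ≤ ι.w i := by
  intro n
  induction n with
  | zero => exact hp0
  | succ n ih =>
    intro C hC ι hι
    rw [show iterRes i pm p0 (n+1)
        = ((iterRes i pm p0 n) ×ˢ pm).image (fun p => CPres i p.1 p.2) from rfl] at hC
    obtain ⟨p, hp, rfl⟩ := Finset.mem_image.1 hC
    obtain ⟨h1, h2⟩ := Finset.mem_product.1 hp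
    rcases mem_CPres hι with ⟨ι₁, hι₁, ι₂, hι₂, hpos, hneg, rfl⟩ | ⟨hmem, hw⟩ | ⟨hmem, hw⟩
    · constructor
      · intro k hk
        have e1 := (ih p.1 h1 ι₁ hι₁).1 k hk
        have e2 := hpm p.2 h2 ι₂ hι₂ k hk
        simp [resolvent, e1, e2]
      · rw [resolvent_w_self hpos.ne' hneg.ne]
    · exact ⟨(ih p.1 h1 ι hmem).1, (ih p.1 h1 ι hmem).2⟩
    · exact ⟨hpm p.2 h2 ι hmem, not_lt.1 hw⟩

lemma closurePlus_inv (i : Fin D) (Pi : Finset (Constraint D)) (q : Fin D → Prop)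
    (hPi : ∀ C ∈ Pi, ∀ ι ∈ C, ∀ k, q k → ι.w k = 0) :
    ∀ C ∈ closurePlus i Pi, ∀ ι ∈ C, (∀ k, q k → ι.w k = 0) ∧ 0 ≤ ι.w i := by
  intro C hC
  obtain ⟨k, _, hk⟩ := Finset.mem_biUnion.1 hC
  refine iterRes_inv i _ _ q ?_ ?_ k C hk
  · intro C' hC'
    exact hPi C' (Finset.mem_filter.1 hC').1
  · intro C' hC' ι hι
    obtain ⟨hC'Pi, _, hnoneg⟩ := Finset.mem_filter.1 hC'
    exact ⟨hPi C' hC'Pi ι hι, not_lt.1 fun h => hnoneg ⟨ι, hι, h⟩⟩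

lemma elimVar_inv (i : Fin D) (Pi : Finset (Constraint D)) (q : Fin D → Prop)
    (hPi : ∀ C ∈ Pi, ∀ ι ∈ C, ∀ k, q k → ι.w k = 0) :
    ∀ C ∈ elimVar i Pi, ∀ ι ∈ C, ∀ k, (q k ∨ k = i) → ι.w k = 0 := by
  intro C hC ι hι k hk
  rcases Finset.mem_union.1 hC with hC | hC
  · obtain ⟨hCPi, hnp, hnn⟩ := Finset.mem_filter.1 hC
    rcases hk with hk | rfl
    · exact hPi C hCPi ι hι k hk
    · exact le_antisymm (not_lt.1 fun h => hnp ⟨ι, hι, h⟩) (not_lt.1 fun h => hnn ⟨ι, hι, h⟩)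
  · obtain ⟨p, hp, rfl⟩ := Finset.mem_image.1 hC
    obtain ⟨h1, h2⟩ := Finset.mem_product.1 hp
    have hclo := closurePlus_inv i Pi q hPi p.1 h1
    obtain ⟨h2Pi, hnp, _⟩ := Finset.mem_filter.1 h2
    rcases mem_CPres hι with ⟨ι₁, hι₁, ι₂, hι₂, hpos, hneg, rfl⟩ | ⟨hmem, hw⟩ | ⟨hmem, hw⟩
    · rcases hk with hk | rfl
      · have e1 := (hclo ι₁ hι₁).1 k hk
        have e2 := hPi p.2 h2Pi ι₂ hι₂ k hk
        simp [resolvent, e1, e2]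
      · exact resolvent_w_self hpos.ne' hneg.ne
    · rcases hk with hk | rfl
      · exact (hclo ι hmem).1 k hk
      · exact le_antisymm (not_lt.1 hw) (hclo ι hmem).2
    · rcases hk with hk | rfl
      · exact hPi p.2 h2Pi ι hmem k hk
      · exact le_antisymm (not_lt.1 fun h => hnp ⟨ι, hmem, h⟩) (not_lt.1 hw)

end DisjElim

namespace DisjElim

variable {D : ℕ}

lemma key_lemma (i : Fin D) (Pi : Finset (Constraint D)) (x : Fin D → ℝ)
    (hx : SatAll (elimVar i Pi) x) (u : ℝ) (Ψs : Constraint D)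
    (hΨs : Ψs ∈ negPart i Pi) (hzs : ¬ zsat i x Ψs)
    (hP2 : ∀ ι ∈ Ψs, ι.w i < 0 → rv i x ι ≤ u) :
    ∀ k ≤ (mixPart i Pi).card, ∀ Ψ ∈ iterRes i (mixPart i Pi) (posPart i Pi) k,
      ¬ zsat i x Ψ → ∃ ι ∈ Ψ, 0 < ι.w i ∧ rv i x ι ≤ u := by
  intro k hk Ψ hΨ hzΨ
  have hclo : Ψ ∈ closurePlus i Pi :=
    Finset.mem_biUnion.2 ⟨k, Finset.mem_range.2 (Nat.lt_succ_of_le hk), hΨ⟩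
  have hmem : CPres i Ψ Ψs ∈ elimVar i Pi :=
    Finset.mem_union_right _ (Finset.mem_image.2
      ⟨(Ψ, Ψs), Finset.mem_product.2 ⟨hclo, hΨs⟩, rfl⟩)
  obtain ⟨ι₀, hι₀, hsat⟩ := hx _ hmem
  rw [ge_iff_le] at hsat
  have hinv := closurePlus_inv i Pi (fun _ => False) (fun C _ ι _ k hk => hk.elim) Ψ hclo
  obtain ⟨hΨsPi, hnp, _⟩ := Finset.mem_filter.1 hΨs
  rcases mem_CPres hι₀ with ⟨ι₁, hι₁, ι₂, hι₂, hpos, hneg, rfl⟩ | ⟨hmem', hw⟩ | ⟨hmem', hw⟩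
  · have := (resolvent_sat x hpos hneg).1 hsat
    exact ⟨ι₁, hι₁, hpos, le_trans this (hP2 ι₂ hι₂ hneg)⟩
  · have hw0 : ι₀.w i = 0 := le_antisymm (not_lt.1 hw) (hinv ι₀ hmem').2
    exact absurd ⟨ι₀, hmem', hw0, hsat⟩ hzΨ
  · have hw0 : ι₀.w i = 0 :=
      le_antisymm (not_lt.1 fun h => hnp ⟨ι₀, hmem', h⟩) (not_lt.1 hw)
    exact absurd ⟨ι₀, hmem', hw0, hsat⟩ hzs

end DisjElim

namespace DisjElim

variable {D : ℕ}

lemma extend (i : Fin D) (Pi : Finset (Constraint D)) (x : Fin D → ℝ)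
    (hx : SatAll (elimVar i Pi) x) : ∃ t, SatAll Pi (Function.update x i t) := by
  classical
  have hfinU : ∀ C : Constraint D, Set.Finite {ι : Ineq D | ι ∈ C ∧ 0 < ι.w i} := fun C =>
    C.finite_toSet.subset fun ι h => h.1
  have hfinN : ∀ C : Constraint D, Set.Finite {ι : Ineq D | ι ∈ C ∧ ι.w i < 0} := fun C =>
    C.finite_toSet.subset fun ι h => h.1
  by_cases hN : ∀ C ∈ Pi, ¬ hasPos i C → hasNeg i C → zsat i x C
  · -- no genuinely negative constraints; pick t large
    obtain ⟨t, ht⟩ := Set.Finite.bddAbove ((Pi.sup id).finite_toSet.image (rv i x))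
    refine ⟨t, fun C hC => ?_⟩
    by_cases hz : zsat i x C
    · exact sat_of_zsat hz t
    by_cases hp : hasPos i C
    · obtain ⟨ι, hι, hw⟩ := hp
      have hrt : rv i x ι ≤ t := ht (Set.mem_image_of_mem _
        (Finset.mem_coe.2 (Finset.mem_sup.2 ⟨C, hC, hι⟩)))
      exact ⟨ι, hι, (sat_pos x hw t).2 hrt⟩
    by_cases hn : hasNeg i C
    · exact absurd (hN C hC hp hn) hz
    · obtain ⟨ι, hι, hs⟩ := hx C (Finset.mem_union_left _ (Finset.mem_filter.2 ⟨hC, hp, hn⟩))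
      have hw0 : ι.w i = 0 := le_antisymm (not_lt.1 fun h => hp ⟨ι, hι, h⟩)
        (not_lt.1 fun h => hn ⟨ι, hι, h⟩)
      exact ⟨ι, hι, by rw [ge_iff_le, eval_update_zero_w x hw0]; exact hs⟩
  · push_neg at hN
    obtain ⟨C₀, hC₀Pi, hC₀p, hC₀n, hC₀z⟩ := hN
    set r := rv i x with hrdef
    set N' : Set (Constraint D) :=
      {C | C ∈ Pi ∧ ¬ hasPos i C ∧ hasNeg i C ∧ ¬ zsat i x C} with hN'def
    have hN'fin : N'.Finite := Pi.finite_toSet.subset fun C h => h.1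
    have hN'ne : N'.Nonempty := ⟨C₀, hC₀Pi, hC₀p, hC₀n, hC₀z⟩
    set uC : Constraint D → ℝ := fun C => sSup (r '' {ι | ι ∈ C ∧ ι.w i < 0}) with huCdef
    set u : ℝ := sInf (uC '' N') with hudef
    have hnegfin : ∀ C : Constraint D, (r '' {ι | ι ∈ C ∧ ι.w i < 0}).Finite :=
      fun C => (hfinN C).image r
    obtain ⟨Ψs, hΨsN', hus⟩ := Set.Nonempty.csInf_mem (hN'ne.image uC) (hN'fin.image uC)
    have hΨsneg : Ψs ∈ negPart i Pi := Finset.mem_filter.2 ⟨hΨsN'.1, hΨsN'.2.1, hΨsN'.2.2.1⟩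
    have hP2 : ∀ ι ∈ Ψs, ι.w i < 0 → r ι ≤ u := by
      intro ι hι hw
      have h1 : r ι ≤ uC Ψs :=
        le_csSup (hnegfin Ψs).bddAbove (Set.mem_image_of_mem r ⟨hι, hw⟩)
      rwa [hus] at h1
    have hP1 : ∀ C ∈ N', ∃ ι ∈ C, ι.w i < 0 ∧ u ≤ r ι := by
      intro C hC
      have h1 : u ≤ uC C := csInf_le (hN'fin.image uC).bddBelow (Set.mem_image_of_mem _ hC)
      obtain ⟨ι, hι, heq⟩ := Set.Nonempty.csSup_mem (s := r '' {ι | ι ∈ C ∧ ι.w i < 0})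
        (by obtain ⟨ι, hι, hw⟩ := hC.2.2.1; exact ⟨r ι, Set.mem_image_of_mem r ⟨hι, hw⟩⟩)
        (hnegfin C)
      exact ⟨ι, hι.1, hι.2, heq ▸ h1⟩
    have key := key_lemma i Pi x hx u Ψs hΨsneg hΨsN'.2.2.2 hP2
    set M := mixPart i Pi with hMdef
    set P0 := posPart i Pi with hP0def
    set PQ : Set (Constraint D) :=
      {C | C ∈ Pi ∧ hasPos i C ∧ ¬ hasNeg i C ∧ ¬ zsat i x C} with hPQdef
    have hPQfin : PQ.Finite := Pi.finite_toSet.subset fun C h => h.1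
    set ml : Constraint D → ℝ := fun C => sInf (r '' {ι | ι ∈ C ∧ 0 < ι.w i}) with hmldef
    have hargmin : ∀ C : Constraint D, hasPos i C → ∃ ι ∈ C, 0 < ι.w i ∧ r ι = ml C := by
      intro C hp
      obtain ⟨ι, hι, heq⟩ := Set.Nonempty.csInf_mem (s := r '' {ι | ι ∈ C ∧ 0 < ι.w i})
        (by obtain ⟨ι, hι, hw⟩ := hp; exact ⟨r ι, Set.mem_image_of_mem r ⟨hι, hw⟩⟩)
        ((hfinU C).image r)
      exact ⟨ι, hι.1, hι.2, heq⟩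
    have hml_le : ∀ (C : Constraint D) (ι : Ineq D), ι ∈ C → 0 < ι.w i → ml C ≤ r ι := by
      intro C ι hι hw
      exact csInf_le ((hfinU C).image r).bddBelow (Set.mem_image_of_mem r ⟨hι, hw⟩)
    have Hgood : ∃ t, t ≤ u ∧ ∀ C ∈ Pi, hasPos i C → ¬ zsat i x C →
        ((∃ ι ∈ C, 0 < ι.w i ∧ r ι ≤ t) ∨ (∃ ι ∈ C, ι.w i < 0 ∧ t ≤ r ι)) := by
      by_contra hH
      push_neg at hH
      -- a base element of PQ
      set A : Set ℝ := insert u (r '' ↑(Pi.sup id)) with hAdef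
      have hAfin : A.Finite := ((Pi.sup id).finite_toSet.image r).insert u
      have ht₀u : sInf A ≤ u := csInf_le hAfin.bddBelow (Set.mem_insert u _)
      have ht₀r : ∀ C ∈ Pi, ∀ ι ∈ C, sInf A ≤ r ι := by
        intro C hC ι hι
        exact csInf_le hAfin.bddBelow (Set.mem_insert_of_mem u
          (Set.mem_image_of_mem r (Finset.mem_coe.2 (Finset.mem_sup.2 ⟨C, hC, hι⟩))))
      obtain ⟨C₁, hC₁Pi, hC₁p, hC₁z, hC₁pos, hC₁neg⟩ := hH (sInf A) ht₀u
      have hC₁PQ : C₁ ∈ PQ := by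
        refine ⟨hC₁Pi, hC₁p, ?_, hC₁z⟩
        rintro ⟨ι, hι, hw⟩
        exact absurd (ht₀r C₁ hC₁Pi ι hι) (not_le.2 (hC₁neg ι hι hw))
      -- the best starting constraint Ψ0
      obtain ⟨Ψ0, hΨ0PQ, hml0⟩ :=
        Set.Nonempty.csSup_mem ((Set.nonempty_of_mem hC₁PQ).image ml) (hPQfin.image ml)
      have hbase : ∀ ι ∈ Ψ0, 0 < ι.w i → ∀ C, C ∈ PQ →
          ∃ ι'' ∈ C, 0 < ι''.w i ∧ r ι'' ≤ r ι := by
        intro ι hι hw C hCPQ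
        obtain ⟨ι'', hι'', hw'', heq⟩ := hargmin C hCPQ.2.1
        refine ⟨ι'', hι'', hw'', ?_⟩
        rw [heq]
        calc ml C ≤ sSup (ml '' PQ) :=
              le_csSup (hPQfin.image ml).bddAbove (Set.mem_image_of_mem _ hCPQ)
          _ = ml Ψ0 := hml0.symm
          _ ≤ r ι := hml_le Ψ0 ι hι hw
      have keystep : ∀ (Ψ : Constraint D) (U : Finset (Constraint D)) (j : ℕ),
          j ≤ M.card → Ψ ∈ iterRes i M P0 j → ¬ zsat i x Ψ →
          (∀ ι ∈ Ψ, 0 < ι.w i → ∀ C, (C ∈ U ∨ C ∈ PQ) →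
            ∃ ι'' ∈ C, 0 < ι''.w i ∧ r ι'' ≤ r ι) →
          ∃ C' : Constraint D, ∃ ιm : Ineq D, C' ∈ M ∧ C' ∉ U ∧ ¬ zsat i x C' ∧
            ιm ∈ Ψ ∧ 0 < ιm.w i ∧ (∀ ι ∈ Ψ, 0 < ι.w i → r ιm ≤ r ι) ∧
            (∀ ι' ∈ C', 0 < ι'.w i → r ιm < r ι') ∧
            (∀ ι' ∈ C', ι'.w i < 0 → r ι' < r ιm) := by
        intro Ψ U j hj hΨ hzΨ hinv
        obtain ⟨ι₁, hι₁, hw₁, hru₁⟩ := key j hj Ψ hΨ hzΨ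
        obtain ⟨ιm, hιm, hwm, heqm⟩ := hargmin Ψ ⟨ι₁, hι₁, hw₁⟩
        have hlb : ∀ ι ∈ Ψ, 0 < ι.w i → r ιm ≤ r ι := by
          intro ι hι hw; rw [heqm]; exact hml_le Ψ ι hι hw
        have hmu : r ιm ≤ u := le_trans (hlb ι₁ hι₁ hw₁) hru₁
        obtain ⟨C', hC'Pi, hC'p, hC'z, hC'pos, hC'neg⟩ := hH (r ιm) hmu
        have hC'notin : ∀ C, (C ∈ U ∨ C ∈ PQ) → C' ≠ C := by
          rintro C hC rfl
          obtain ⟨ι'', hι'', hw'', hle⟩ := hinv ιm hιm hwm C' hC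
          exact absurd hle (not_le.2 (hC'pos ι'' hι'' hw''))
        have hC'n : hasNeg i C' := by
          by_contra hn
          exact hC'notin C' (Or.inr ⟨hC'Pi, hC'p, hn, hC'z⟩) rfl
        exact ⟨C', ιm, Finset.mem_filter.2 ⟨hC'Pi, hC'p, hC'n⟩,
          fun h => hC'notin C' (Or.inl h) rfl, hC'z, hιm, hwm, hlb, hC'pos, hC'neg⟩
      have chain : ∀ j, j ≤ M.card → ∃ (Ψ : Constraint D) (U : Finset (Constraint D)),
          Ψ ∈ iterRes i M P0 j ∧ U ⊆ M ∧ U.card = j ∧ ¬ zsat i x Ψ ∧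
          (∀ ι ∈ Ψ, 0 < ι.w i → ∀ C, (C ∈ U ∨ C ∈ PQ) →
            ∃ ι'' ∈ C, 0 < ι''.w i ∧ r ι'' ≤ r ι) := by
        intro j
        induction j with
        | zero =>
          intro _
          refine ⟨Ψ0, ∅, ?_, Finset.empty_subset _, Finset.card_empty, hΨ0PQ.2.2.2, ?_⟩
          · exact Finset.mem_filter.2 ⟨hΨ0PQ.1, hΨ0PQ.2.1, hΨ0PQ.2.2.1⟩
          · intro ι hι hw C hC
            rcases hC with hC | hC
            · exact absurd hC (Finset.notMem_empty C)
            · exact hbase ι hι hw C hC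
        | succ j ih =>
          intro hj
          obtain ⟨Ψ, U, hΨ, hUM, hUcard, hzΨ, hinv⟩ := ih (Nat.le_of_succ_le hj)
          obtain ⟨C', ιm, hC'M, hC'U, hC'z, hιm, hwm, hlb, hC'pos, hC'neg⟩ :=
            keystep Ψ U j (Nat.le_of_succ_le hj) hΨ hzΨ hinv
          refine ⟨CPres i Ψ C', insert C' U, ?_, Finset.insert_subset hC'M hUM,
            by rw [Finset.card_insert_of_notMem hC'U, hUcard], ?_, ?_⟩
          · rw [show iterRes i M P0 (j+1) = ((iterRes i M P0 j) ×ˢ M).image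
              (fun p => CPres i p.1 p.2) from rfl]
            exact Finset.mem_image.2 ⟨(Ψ, C'), Finset.mem_product.2 ⟨hΨ, hC'M⟩, rfl⟩
          · rintro ⟨ι₀, hι₀, hw0, hs0⟩
            rcases mem_CPres hι₀ with ⟨ι₁, hι₁, ι₂, hι₂, hpos, hneg, rfl⟩ | ⟨hmem, hw⟩ | ⟨hmem, hw⟩
            · have h1 := (resolvent_sat x hpos hneg).1 hs0
              have h2 := hC'neg ι₂ hι₂ hneg
              have h3 := hlb ι₁ hι₁ hpos
              simp only [← hrdef] at h1
              linarith
            · exact hzΨ ⟨ι₀, hmem, hw0, hs0⟩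
            · exact hC'z ⟨ι₀, hmem, hw0, hs0⟩
          · intro ι hι hw C hC
            have hιC' : ι ∈ C' := by
              rcases mem_CPres hι with ⟨ι₁, hι₁, ι₂, hι₂, hpos, hneg, rfl⟩ | ⟨hmem, hw'⟩ | ⟨hmem, _⟩
              · rw [resolvent_w_self hpos.ne' hneg.ne] at hw; exact absurd hw (lt_irrefl 0)
              · exact absurd hw hw'
              · exact hmem
            have hm : r ιm < r ι := hC'pos ι hιC' hw
            rcases hC with hC | hC
            · rcases Finset.mem_insert.1 hC with rfl | hCU
              · exact ⟨ι, hιC', hw, le_refl _⟩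
              · obtain ⟨ι'', hι'', hw'', hle⟩ := hinv ιm hιm hwm C (Or.inl hCU)
                exact ⟨ι'', hι'', hw'', le_trans hle (le_of_lt hm)⟩
            · obtain ⟨ι'', hι'', hw'', hle⟩ := hinv ιm hιm hwm C (Or.inr hC)
              exact ⟨ι'', hι'', hw'', le_trans hle (le_of_lt hm)⟩
      obtain ⟨Ψ, U, hΨ, hUM, hUcard, hzΨ, hinv⟩ := chain M.card (le_refl _)
      obtain ⟨C', _, hC'M, hC'U, _⟩ := keystep Ψ U M.card (le_refl _) hΨ hzΨ hinv
      have hUM' : U = M := Finset.eq_of_subset_of_card_le hUM (le_of_eq hUcard.symm)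
      exact hC'U (hUM' ▸ hC'M)
    obtain ⟨t, htu, hG⟩ := Hgood
    refine ⟨t, fun C hC => ?_⟩
    by_cases hz : zsat i x C
    · exact sat_of_zsat hz t
    by_cases hp : hasPos i C
    · rcases hG C hC hp hz with ⟨ι, hι, hw, hrt⟩ | ⟨ι, hι, hw, htr⟩
      · exact ⟨ι, hι, (sat_pos x hw t).2 hrt⟩
      · exact ⟨ι, hι, (sat_neg x hw t).2 htr⟩
    by_cases hn : hasNeg i C
    · obtain ⟨ι, hι, hw, hur⟩ := hP1 C ⟨hC, hp, hn, hz⟩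
      exact ⟨ι, hι, (sat_neg x hw t).2 (le_trans htu hur)⟩
    · obtain ⟨ι, hι, hs⟩ := hx C (Finset.mem_union_left _ (Finset.mem_filter.2 ⟨hC, hp, hn⟩))
      have hw0 : ι.w i = 0 := le_antisymm (not_lt.1 fun h => hp ⟨ι, hι, h⟩)
        (not_lt.1 fun h => hn ⟨ι, hι, h⟩)
      exact ⟨ι, hι, by rw [ge_iff_le, eval_update_zero_w x hw0]; exact hs⟩

end DisjElim

namespace DisjElim

variable {D : ℕ}

lemma piSeq_sat (Pi : Finset (Constraint D)) :
    ∀ n, (∃ y, SatAll (piSeq Pi n) y) → ∃ y, SatAll Pi y := by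
  intro n
  induction n with
  | zero => exact id
  | succ n ih =>
    rintro ⟨y, hy⟩
    by_cases h : D - 1 - n < D
    · rw [piSeq, dif_pos h] at hy
      obtain ⟨t, ht⟩ := extend _ _ y hy
      exact ih ⟨_, ht⟩
    · rw [piSeq, dif_neg h] at hy
      exact ih ⟨y, hy⟩

lemma piSeq_inv (Pi : Finset (Constraint D)) :
    ∀ n, ∀ C ∈ piSeq Pi n, ∀ ι ∈ C, ∀ k : Fin D, D - n ≤ (k : ℕ) → ι.w k = 0 := by
  intro n
  induction n with
  | zero =>
    intro C _ ι _ k hk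
    exact absurd k.isLt (by omega)
  | succ n ih =>
    by_cases h : D - 1 - n < D
    · intro C hC ι hι k hk
      rw [piSeq, dif_pos h] at hC
      have := elimVar_inv ⟨D - 1 - n, h⟩ (piSeq Pi n)
        (fun k => D - n ≤ (k : ℕ)) (fun C hC ι hι k hk => ih C hC ι hι k hk) C hC ι hι k
      refine this ?_
      by_cases hk' : (k : ℕ) = D - 1 - n
      · exact Or.inr (Fin.ext hk')
      · exact Or.inl (by omega)
    · intro C hC ι hι k hk
      exact absurd k.isLt (by omega)

end DisjElim


open DisjElim in
/-- Refutational completeness of CP resolution (Corollary 1): if a finite set `Π` of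
constraints over `x_1,…,x_D` is unsatisfiable, then the variable-free set
`Π_0 = piSeq Π D`, obtained by successively eliminating `x_D, …, x_1`, contains a false
constraint: a disjunction of constant inequalities `b ≥ 0` with every constant `b < 0`. -/
theorem stmt_17 {D : ℕ} (Pi : Finset (Constraint D)) (hunsat : ¬ ∃ x, SatAll Pi x) :
    ∃ C ∈ piSeq Pi D, ∀ ι ∈ C, (∀ k, ι.w k = 0) ∧ ι.b < 0 := by
  have hD : ¬ ∃ y, SatAll (piSeq Pi D) y := fun h => hunsat (piSeq_sat Pi D h)
  push_neg at hD
  have h0 := hD 0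
  unfold SatAll at h0
  push_neg at h0
  obtain ⟨C, hC, hCs⟩ := h0
  unfold Constraint.Sat at hCs
  push_neg at hCs
  refine ⟨C, hC, fun ι hι => ?_⟩
  constructor
  · intro k
    exact piSeq_inv Pi D C hC ι hι k (by omega)
  · have := hCs ι hι
    simpa [Ineq.eval] using this
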